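/- The quotient of Cantor space by the relation identifying s and t whenever Σ_i s_i/2^{i+1} ≡ Σ_i t_i/2^{i+1} (mod 1) — i.e., additionally identifying the constant-0 and constant-1 sequences — is homeomorphic to the circle ℝ/ℤ. -/
import Mathlib


/-- The real number in `[0,1]` represented by an infinite binary sequence. -/
noncomputable def phi (s : ℕ → Fin 2) : ℝ := ∑' i : ℕ, ((s i : ℕ) : ℝ) / 2 ^ (i + 1)

/-- The setoid on Cantor space identifying sequences whose represented reals are
congruent modulo 1 (this additionally identifies the constant-0 and constant-1
sequences). -/
def sameRealMod1 : Setoid (ℕ → Fin 2) :=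
  ⟨fun s t => (phi s : AddCircle (1 : ℝ)) = (phi t : AddCircle (1 : ℝ)),
    fun _ => rfl, Eq.symm, Eq.trans⟩

lemma phi_term_le (s : ℕ → Fin 2) (i : ℕ) :
    ((s i : ℕ) : ℝ) / 2 ^ (i + 1) ≤ (1 / 2) ^ i := by
  have h1 : ((s i : ℕ) : ℝ) ≤ 1 := by
    have := (s i).isLt
    exact_mod_cast Nat.lt_succ_iff.mp this
  have h2 : (0:ℝ) < 2 ^ (i+1) := by positivity
  rw [div_le_iff₀ h2]
  have h3 : (1/2:ℝ)^i * 2^(i+1) = 2 := by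
    rw [div_pow, one_pow, pow_succ]
    field_simp
  nlinarith [h3]

lemma phi_summable (s : ℕ → Fin 2) :
    Summable (fun i : ℕ => ((s i : ℕ) : ℝ) / 2 ^ (i + 1)) := by
  apply Summable.of_nonneg_of_le (fun i => by positivity) (phi_term_le s)
  exact summable_geometric_of_lt_one (by norm_num) (by norm_num)

lemma phi_continuous : Continuous phi := by
  apply continuous_tsum (u := fun i : ℕ => (1/2 : ℝ) ^ i)
  · intro i
    exact (continuous_of_discreteTopology (f := fun v : Fin 2 => ((v : ℕ) : ℝ) / 2 ^ (i+1))).comp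
      (continuous_apply i)
  · exact summable_geometric_of_lt_one (by norm_num) (by norm_num)
  · intro n x
    rw [Real.norm_eq_abs, abs_of_nonneg (by positivity)]
    exact phi_term_le x n

lemma floor_two_mul_cases (y : ℝ) : ⌊2*y⌋ = 2*⌊y⌋ ∨ ⌊2*y⌋ = 2*⌊y⌋+1 := by
  have h1 : 2*⌊y⌋ ≤ ⌊2*y⌋ := by
    apply Int.le_floor.2; push_cast; linarith [Int.floor_le y]
  have h2 : ⌊2*y⌋ < 2*⌊y⌋ + 2 := by
    apply Int.floor_lt.2; push_cast; linarith [Int.lt_floor_add_one y]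
  omega

/-- The binary digits of a real number. -/
noncomputable def dig (x : ℝ) (n : ℕ) : Fin 2 :=
  if ⌊x * 2 ^ (n+1)⌋ - 2 * ⌊x * 2 ^ n⌋ = 1 then 1 else 0

lemma dig_cast (x : ℝ) (n : ℕ) :
    ((dig x n : ℕ) : ℝ) = (⌊x * 2 ^ (n+1)⌋ : ℝ) - 2 * (⌊x * 2 ^ n⌋ : ℝ) := by
  have h2 : x * 2 ^ (n+1) = 2 * (x * 2 ^ n) := by ring
  rcases floor_two_mul_cases (x * 2 ^ n) with h | h <;>
    · unfold dig
      rw [h2, h]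
      push_cast
      simp

lemma dig_partial_sum (x : ℝ) (hx : ⌊x⌋ = 0) (n : ℕ) :
    ∑ i ∈ Finset.range n, ((dig x i : ℕ) : ℝ) / 2 ^ (i+1)
      = (⌊x * 2 ^ n⌋ : ℝ) / 2 ^ n := by
  induction n with
  | zero => simp [hx]
  | succ n ih =>
    rw [Finset.sum_range_succ, ih, dig_cast]
    have h1 : (0:ℝ) < 2 ^ n := by positivity
    have h2 : (0:ℝ) < 2 ^ (n+1) := by positivity
    field_simp
    ring

lemma phi_dig (x : ℝ) (hx : x ∈ Set.Ico (0:ℝ) 1) : phi (dig x) = x := by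
  have hfl : ⌊x⌋ = 0 := Int.floor_eq_zero_iff.2 hx
  have hsum := phi_summable (dig x)
  have htend := hsum.hasSum.tendsto_sum_nat
  have htend2 : Filter.Tendsto
      (fun n => ∑ i ∈ Finset.range n, ((dig x i : ℕ) : ℝ) / 2 ^ (i+1))
      Filter.atTop (nhds x) := by
    simp only [dig_partial_sum x hfl]
    have hlow : Filter.Tendsto (fun n : ℕ => x - (1/2:ℝ)^n) Filter.atTop (nhds x) := by
      have := tendsto_pow_atTop_nhds_zero_of_lt_one (show (0:ℝ) ≤ 1/2 by norm_num)
        (show (1/2:ℝ) < 1 by norm_num)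
      simpa using (tendsto_const_nhds (x := x)).sub this
    apply tendsto_of_tendsto_of_tendsto_of_le_of_le hlow tendsto_const_nhds
    · intro n
      have h1 : (0:ℝ) < 2 ^ n := by positivity
      have h2 : x * 2 ^ n - 1 < (⌊x * 2 ^ n⌋ : ℝ) := by
        linarith [Int.lt_floor_add_one (x * 2 ^ n)]
      rw [le_div_iff₀ h1]
      have : (1/2:ℝ)^n * 2^n = 1 := by
        rw [div_pow, one_pow, div_mul_cancel₀]
        positivity
      nlinarith
    · intro n
      have h1 : (0:ℝ) < 2 ^ n := by positivity
      rw [div_le_iff₀ h1]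
      linarith [Int.floor_le (x * 2 ^ n)]
  exact tendsto_nhds_unique htend htend2

lemma q_surjective : Function.Surjective (fun s : ℕ → Fin 2 => (phi s : AddCircle (1:ℝ))) := by
  intro z
  obtain ⟨y, rfl⟩ := QuotientAddGroup.mk_surjective z
  set x := Int.fract y with hxdef
  have hx : x ∈ Set.Ico (0:ℝ) 1 := ⟨Int.fract_nonneg y, Int.fract_lt_one y⟩
  refine ⟨dig x, ?_⟩
  simp only [phi_dig x hx]
  show (x : AddCircle (1:ℝ)) = y
  have : y - x = (⌊y⌋ : ℝ) := by
    rw [hxdef, Int.self_sub_fract]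
  rw [← sub_eq_zero, ← AddCircle.coe_sub, AddCircle.coe_eq_zero_iff]
  exact ⟨-⌊y⌋, by rw [zsmul_eq_mul]; push_cast; linarith⟩

/-- The quotient of Cantor space by the relation identifying `s` and `t` whenever
`Σ s_i/2^{i+1} ≡ Σ t_i/2^{i+1} (mod 1)` is homeomorphic to the circle `ℝ/ℤ`. -/
theorem stmt_16 : Nonempty (Quotient sameRealMod1 ≃ₜ AddCircle (1 : ℝ)) := by
  let Q : Quotient sameRealMod1 → AddCircle (1:ℝ) :=
    Quotient.lift (fun s => (phi s : AddCircle (1:ℝ))) (fun _ _ h => h)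
  have hcont : Continuous Q :=
    continuous_quot_lift _ ((AddCircle.continuous_mk' 1).comp phi_continuous)
  have hinj : Function.Injective Q := by
    intro a b
    induction a using Quotient.ind
    induction b using Quotient.ind
    intro h
    exact Quotient.sound h
  have hsurj : Function.Surjective Q := by
    intro z
    obtain ⟨s, hs⟩ := q_surjective z
    exact ⟨⟦s⟧, hs⟩
  exact ⟨(Continuous.homeoOfEquivCompactToT2 (f := Equiv.ofBijective Q ⟨hinj, hsurj⟩) hcont)⟩
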